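/- Let n ≥ 4 be even. Setting L₀ = {(u_{n/2}, v), (u_{n/2+1}, v) : v ∈ V(P)} in P_n □ P (P the Petersen graph), one has diam(L₀) = 3 and Σ_{x ∈ V(P_n □ P)} d(x, L₀) = 5n(n−2)/2, and consequently the general lower bound yields rn(P_n □ P) ≥ 5n² − n + 1. -/

import Mathlib

open SimpleGraph Finset

/-- The Petersen graph as the Kneser graph K(5,2). -/
def petersen : SimpleGraph {s : Finset (Fin 5) // s.card = 2} where
  Adj a b := Disjoint a.1 b.1
  symm := ⟨fun _ _ h => h.symm⟩
  loopless := ⟨fun a h => by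
    have h0 : a.1 = ⊥ := disjoint_self.mp h
    have h2 := a.2
    rw [h0] at h2
    simp at h2⟩

/-- A radio labeling of `G`: for all distinct `u, v`,
`d(u,v) + |φ(u) - φ(v)| ≥ diam(G) + 1`. -/
def IsRadioLabeling {V : Type*} (G : SimpleGraph V) (φ : V → ℕ) : Prop :=
  ∀ u v : V, u ≠ v → (G.diam : ℤ) + 1 ≤ (G.dist u v : ℤ) + |(φ u : ℤ) - (φ v : ℤ)|

/-- The span of a labeling: the maximum difference between two labels. -/
noncomputable def span {V : Type*} (φ : V → ℕ) : ℕ :=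
  sSup (Set.range fun p : V × V => φ p.1 - φ p.2)

/-- The radio number of `G`: the minimum span over all radio labelings. -/
noncomputable def radioNumber {V : Type*} (G : SimpleGraph V) : ℕ :=
  sInf {s | ∃ φ : V → ℕ, IsRadioLabeling G φ ∧ span φ = s}

/-- `d(v, S)`: the minimum distance from `v` to a vertex of `S`. -/
noncomputable def distToSet {V : Type*} (G : SimpleGraph V) (v : V) (S : Finset V) : ℕ :=
  sInf ((fun w => G.dist v w) '' ↑S)

/-- `diam(S)`: the maximum distance in `G` between two vertices of `S`. -/
noncomputable def setDiam {V : Type*} (G : SimpleGraph V) (S : Finset V) : ℕ :=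
  sSup {d | ∃ x ∈ S, ∃ y ∈ S, G.dist x y = d}


/-!
Distances in `P_n □ P` add: `d((i, a), (j, b)) = |i - j| + d_P(a, b)` with `d_P ≤ 2`, attained.
Hence the two middle layers have diameter `1 + 2 = 3`, and a vertex in layer `i` lies at
distance `min |i - (n/2 - 1)| |i - n/2|` from them; each layer has 10 vertices, which gives
`Σ d(x, L₀) = 5n(n - 2)/2`.

For the general bound, list the vertices `x₀, …, x_{p-1}` by increasing label. The radio
condition together with `d(x, y) ≤ d(x, L) + diam L + d(y, L)` gives
`φ(x_{k+1}) - φ(x_k) ≥ diam G + 1 - diam L - d(x_k, L) - d(x_{k+1}, L)`, and summing over `k`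
charges every `d(x, L)` at most twice. With `p = 10n`, `diam = n + 1` and `diam L₀ = 3` the
bound is `(10n - 1)(n - 1) - 5n(n - 2) = 5n² - n + 1`.
-/

namespace SimpleGraph

variable {α β : Type*} {G : SimpleGraph α} {H : SimpleGraph β}

lemma dist_boxProd {x y : α × β} (h₁ : G.Reachable x.1 y.1) (h₂ : H.Reachable x.2 y.2) :
    (G □ H).dist x y = G.dist x.1 y.1 + H.dist x.2 y.2 := by
  have h : (G □ H).Reachable x y := reachable_boxProd.mpr ⟨h₁, h₂⟩
  apply Nat.cast_injective (R := ℕ∞)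
  rw [Nat.cast_add, h.coe_dist_eq_edist, h₁.coe_dist_eq_edist, h₂.coe_dist_eq_edist,
    edist_boxProd]

lemma diam_boxProd [Finite α] [Finite β] (hG : G.Connected) (hH : H.Connected) :
    (G □ H).diam = G.diam + H.diam := by
  have := hG.nonempty
  have := hH.nonempty
  have hGH := hG.boxProd hH
  apply le_antisymm
  · obtain ⟨x, y, hxy⟩ := (G □ H).exists_dist_eq_diam
    rw [← hxy, dist_boxProd (hG.preconnected _ _) (hH.preconnected _ _)]
    exact add_le_add (dist_le_diam (connected_iff_ediam_ne_top.mp hG))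
      (dist_le_diam (connected_iff_ediam_ne_top.mp hH))
  · obtain ⟨u, v, huv⟩ := G.exists_dist_eq_diam
    obtain ⟨u', v', huv'⟩ := H.exists_dist_eq_diam
    rw [← huv, ← huv', ← dist_boxProd (x := (u, u')) (y := (v, v')) (hG.preconnected _ _)
      (hH.preconnected _ _)]
    exact dist_le_diam (connected_iff_ediam_ne_top.mp hGH)

lemma pathGraph_dist {n : ℕ} (i j : Fin n) : (pathGraph n).dist i j = Nat.dist i j := by
  apply le_antisymm
  · wlog hij : i ≤ j generalizing i j
    · rw [dist_comm, Nat.dist_comm]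
      exact this j i (le_of_not_ge hij)
    obtain ⟨k, hk⟩ := Nat.exists_eq_add_of_le hij
    rw [show Nat.dist i j = k by simp only [Nat.dist]; omega]
    induction k generalizing j with
    | zero => simp [Fin.ext (hk.trans (Nat.add_zero _))]
    | succ k ih =>
      let j' : Fin n := ⟨i + k, by omega⟩
      have hadj : (pathGraph n).Adj j' j := pathGraph_adj.mpr (Or.inl (by simp [j', hk]; omega))
      calc (pathGraph n).dist i j ≤ (pathGraph n).dist i j' + (pathGraph n).dist j' j :=
            (pathGraph_preconnected n i j').dist_triangle_left j
        _ ≤ k + 1 := by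
            rw [dist_eq_one_iff_adj.mpr hadj]
            exact Nat.add_le_add_right (ih j' (Fin.le_def.mpr (by simp [j'])) rfl) 1
  · obtain ⟨w, hw⟩ := (pathGraph_preconnected n i j).exists_walk_length_eq_dist
    rw [← hw]
    clear hw
    induction w with
    | nil => simp
    | @cons a b c hab w ih =>
      rw [Walk.length_cons]
      have := Nat.dist.triangle_inequality a b c
      rcases pathGraph_adj.mp hab with h | h <;> simp only [Nat.dist] at this ih ⊢ <;> omega

lemma pathGraph_connected_of_neZero {n : ℕ} [NeZero n] : (pathGraph n).Connected :=
  ⟨pathGraph_preconnected n⟩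

lemma pathGraph_diam (n : ℕ) [NeZero n] : (pathGraph n).diam = n - 1 := by
  apply le_antisymm
  · obtain ⟨i, j, hij⟩ := (pathGraph n).exists_dist_eq_diam
    rw [← hij, pathGraph_dist]
    have := i.isLt
    have := j.isLt
    simp only [Nat.dist]
    omega
  · have h : (pathGraph n).dist 0 ⟨n - 1, by have := NeZero.pos n; omega⟩ = n - 1 := by
      simp [pathGraph_dist, Nat.dist]
    rw [← h]
    exact dist_le_diam (connected_iff_ediam_ne_top.mp pathGraph_connected_of_neZero)

end SimpleGraph

section SetDistances

variable {V : Type*} {G : SimpleGraph V} {S : Finset V} {u v x y : V}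

lemma distToSet_le (hv : v ∈ S) : distToSet G u S ≤ G.dist u v :=
  Nat.sInf_le ⟨v, hv, rfl⟩

lemma exists_dist_eq_distToSet (hS : S.Nonempty) (u : V) :
    ∃ v ∈ S, G.dist u v = distToSet G u S :=
  Nat.sInf_mem ((Finset.coe_nonempty.mpr hS).image _)

lemma distToSet_eq_dist (hv : v ∈ S) (hmin : ∀ w ∈ S, G.dist u v ≤ G.dist u w) :
    distToSet G u S = G.dist u v := by
  obtain ⟨w, hw, hdist⟩ := exists_dist_eq_distToSet ⟨v, hv⟩ u
  exact le_antisymm (distToSet_le hv) (hdist ▸ hmin w hw)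

lemma dist_le_setDiam (hx : x ∈ S) (hy : y ∈ S) : G.dist x y ≤ setDiam G S := by
  refine le_csSup (Set.Finite.bddAbove ?_) ⟨x, hx, y, hy, rfl⟩
  refine ((S ×ˢ S).finite_toSet.image fun p => G.dist p.1 p.2).subset ?_
  rintro _ ⟨x, hx, y, hy, rfl⟩
  exact ⟨(x, y), Finset.mem_product.mpr ⟨hx, hy⟩, rfl⟩

lemma setDiam_le {k : ℕ} (h : ∀ x ∈ S, ∀ y ∈ S, G.dist x y ≤ k) : setDiam G S ≤ k :=
  csSup_le' (by rintro _ ⟨x, hx, y, hy, rfl⟩; exact h x hx y hy)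

lemma SimpleGraph.Connected.dist_le_distToSet_add_setDiam_add (hG : G.Connected)
    (hS : S.Nonempty) (u v : V) :
    G.dist u v ≤ distToSet G u S + setDiam G S + distToSet G v S := by
  obtain ⟨u', hu', hu⟩ := exists_dist_eq_distToSet (G := G) hS u
  obtain ⟨v', hv', hv⟩ := exists_dist_eq_distToSet (G := G) hS v
  calc G.dist u v ≤ G.dist u u' + G.dist u' v' + G.dist v' v :=
        hG.dist_triangle.trans (Nat.add_le_add_right hG.dist_triangle _)
    _ ≤ distToSet G u S + setDiam G S + distToSet G v S := by
        rw [hu, G.dist_comm (u := v'), hv]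
        exact Nat.add_le_add_right (Nat.add_le_add_left (dist_le_setDiam hu' hv') _) _

end SetDistances

lemma sub_le_span {V : Type*} [Finite V] (φ : V → ℕ) (u v : V) : φ u - φ v ≤ span φ :=
  le_csSup (Set.finite_range _).bddAbove ⟨(u, v), rfl⟩

lemma exists_isRadioLabeling {V : Type*} [Fintype V] (G : SimpleGraph V) :
    ∃ φ : V → ℕ, IsRadioLabeling G φ := by
  refine ⟨fun v => (G.diam + 1) * Fintype.equivFin V v, fun u v huv => ?_⟩
  have hne : (Fintype.equivFin V u : ℤ) ≠ Fintype.equivFin V v := by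
    simpa [Fin.val_eq_val] using huv
  have hgap : (1 : ℤ) ≤ |(Fintype.equivFin V u : ℤ) - Fintype.equivFin V v| :=
    Int.one_le_abs (sub_ne_zero.mpr hne)
  push_cast
  rw [← mul_sub, abs_mul, abs_of_nonneg (by positivity)]
  nlinarith [Nat.cast_nonneg (α := ℤ) (G.dist u v)]

lemma le_radioNumber {V : Type*} [Fintype V] {G : SimpleGraph V} {b : ℕ}
    (h : ∀ φ, IsRadioLabeling G φ → b ≤ span φ) : b ≤ radioNumber G := by
  obtain ⟨φ, hφ⟩ := exists_isRadioLabeling G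
  exact le_csInf ⟨_, φ, hφ, rfl⟩ (by rintro _ ⟨φ, hφ, rfl⟩; exact h φ hφ)

-- Induction over the vertices in increasing order of `φ`, i.e. the telescoping sum over
-- consecutive labels; the term `f t` records that the current top vertex is charged only once.
lemma exists_sub_ge_of_gap {V : Type*} [DecidableEq V] {φ f : V → ℕ} {c : ℤ}
    (hgap : ∀ u v, u ≠ v → φ u ≤ φ v → c ≤ (φ v : ℤ) - φ u + f u + f v)
    (s : Finset V) (hs : s.Nonempty) :
    ∃ t ∈ s, ∃ b ∈ s, ((#s : ℤ) - 1) * c - 2 * ∑ x ∈ s, (f x : ℤ) + f t ≤ (φ t : ℤ) - φ b := by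
  induction s using Finset.induction_on_max_value φ with
  | empty => exact absurd hs Finset.not_nonempty_empty
  | insert a s ha hmax ih =>
    rcases s.eq_empty_or_nonempty with rfl | hs'
    · exact ⟨a, by simp, a, by simp, by simp; omega⟩
    obtain ⟨t, ht, b, hb, htb⟩ := ih hs'
    have hta := hgap t a (ne_of_mem_of_not_mem ht ha) (hmax t ht)
    refine ⟨a, Finset.mem_insert_self a s, b, Finset.mem_insert_of_mem hb, ?_⟩
    rw [Finset.card_insert_of_notMem ha, Finset.sum_insert ha]
    push_cast
    linarith

theorem IsRadioLabeling.le_span {V : Type*} [Fintype V] {G : SimpleGraph V} {φ : V → ℕ}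
    (hφ : IsRadioLabeling G φ) (hG : G.Connected) {L : Finset V} (hL : L.Nonempty) :
    ((Fintype.card V : ℤ) - 1) * (G.diam + 1 - setDiam G L)
      - 2 * ∑ x, (distToSet G x L : ℤ) ≤ span φ := by
  classical
  have hgap (u v : V) (huv : u ≠ v) (hle : φ u ≤ φ v) :
      (G.diam + 1 - setDiam G L : ℤ) ≤ (φ v : ℤ) - φ u + distToSet G u L + distToSet G v L := by
    have hrad := hφ u v huv
    rw [abs_sub_comm, abs_of_nonneg (by omega)] at hrad
    have := hG.dist_le_distToSet_add_setDiam_add hL u v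
    omega
  have := hG.nonempty
  obtain ⟨t, -, b, -, htb⟩ := exists_sub_ge_of_gap hgap Finset.univ Finset.univ_nonempty
  have := sub_le_span φ t b
  rw [Finset.card_univ] at htb
  omega

abbrev PetersenVertex := {s : Finset (Fin 5) // s.card = 2}

lemma petersen_exists_common_neighbor : ∀ a b : PetersenVertex, a ≠ b → ¬ Disjoint a.1 b.1 →
    ∃ c : PetersenVertex, Disjoint a.1 c.1 ∧ Disjoint c.1 b.1 := by
  decide

lemma petersen_exists_walk_length_le_two (a b : PetersenVertex) :
    ∃ w : petersen.Walk a b, w.length ≤ 2 := by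
  by_cases hab : a = b
  · subst hab
    exact ⟨.nil, by simp⟩
  by_cases hadj : petersen.Adj a b
  · exact ⟨hadj.toWalk, by simp⟩
  obtain ⟨c, hac, hcb⟩ := petersen_exists_common_neighbor a b hab hadj
  exact ⟨.cons (show petersen.Adj a c from hac) (show petersen.Adj c b from hcb).toWalk, by simp⟩

lemma petersen_connected : petersen.Connected :=
  (connected_iff _).mpr ⟨fun a b => (petersen_exists_walk_length_le_two a b).elim fun w _ => ⟨w⟩,
    ⟨⟨{0, 1}, rfl⟩⟩⟩

lemma petersen_dist_le_two (a b : PetersenVertex) : petersen.dist a b ≤ 2 :=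
  (petersen_exists_walk_length_le_two a b).elim fun w hw => (dist_le w).trans hw

lemma petersen_diam : petersen.diam = 2 := by
  have := petersen_connected.nonempty
  apply le_antisymm
  · obtain ⟨a, b, hab⟩ := petersen.exists_dist_eq_diam
    exact hab ▸ petersen_dist_le_two a b
  · let a : PetersenVertex := ⟨{0, 1}, rfl⟩
    let b : PetersenVertex := ⟨{1, 2}, rfl⟩
    have hab : petersen.dist a b = 2 := by
      have hpos := petersen_connected.pos_dist_of_ne (u := a) (v := b) (by decide)
      have hne : petersen.dist a b ≠ 1 := fun h =>
        (by decide : ¬ Disjoint a.1 b.1) (dist_eq_one_iff_adj.mp h)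
      have := petersen_dist_le_two a b
      omega
    exact hab.symm.trans_le (dist_le_diam (connected_iff_ediam_ne_top.mp petersen_connected))

lemma card_petersenVertex : Fintype.card PetersenVertex = 10 := by
  decide

lemma sum_range_two_mul_dist_to_middle (h : ℕ) :
    ∑ i ∈ Finset.range (2 * h), (if i < h then h - 1 - i else i - h) = h * (h - 1) := by
  rw [two_mul, Finset.sum_range_add]
  have hlow : ∑ i ∈ Finset.range h, (if i < h then h - 1 - i else i - h)
      = ∑ i ∈ Finset.range h, i := by
    rw [← Finset.sum_range_reflect (fun i => i) h]
    exact Finset.sum_congr rfl fun i hi => if_pos (Finset.mem_range.mp hi)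
  have hhigh : ∑ i ∈ Finset.range h, (if h + i < h then h - 1 - (h + i) else h + i - h)
      = ∑ i ∈ Finset.range h, i :=
    Finset.sum_congr rfl fun i _ => by rw [if_neg (by omega)]; omega
  rw [hlow, hhigh, ← two_mul, mul_comm, Finset.sum_range_id_mul_two]

section PetersenPrism

variable {n : ℕ}

lemma dist_pathGraph_boxProd_petersen (x y : Fin n × PetersenVertex) :
    (pathGraph n □ petersen).dist x y = Nat.dist x.1 y.1 + petersen.dist x.2 y.2 := by
  rw [dist_boxProd (pathGraph_preconnected n _ _) (petersen_connected.preconnected _ _),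
    pathGraph_dist]

lemma diam_pathGraph_boxProd_petersen [NeZero n] : (pathGraph n □ petersen).diam = n + 1 := by
  rw [diam_boxProd pathGraph_connected_of_neZero petersen_connected, pathGraph_diam, petersen_diam]
  have := NeZero.pos n
  omega

-- The paper's `L₀ = {u_{n/2}, u_{n/2+1}} × V(P)`; path vertices are indexed from `0` here.
variable (n) in
def middleLayers : Finset (Fin n × PetersenVertex) :=
  {x | x.1.val = n / 2 - 1 ∨ x.1.val = n / 2}

lemma middleLayers_nonempty (hn : 2 ≤ n) : (middleLayers n).Nonempty :=
  ⟨(⟨n / 2, by omega⟩, ⟨{0, 1}, rfl⟩), by simp [middleLayers]⟩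

lemma setDiam_middleLayers (hn : 2 ≤ n) :
    setDiam (pathGraph n □ petersen) (middleLayers n) = 3 := by
  apply le_antisymm
  · refine setDiam_le fun x hx y hy => ?_
    simp only [middleLayers, Finset.mem_filter, Finset.mem_univ, true_and] at hx hy
    rw [dist_pathGraph_boxProd_petersen]
    have := petersen_dist_le_two x.2 y.2
    simp only [Nat.dist]
    omega
  · have := petersen_connected.nonempty
    obtain ⟨a, b, hab⟩ := petersen.exists_dist_eq_diam
    have hx : ((⟨n / 2 - 1, by omega⟩, a) : Fin n × PetersenVertex) ∈ middleLayers n := by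
      simp [middleLayers]
    have hy : ((⟨n / 2, by omega⟩, b) : Fin n × PetersenVertex) ∈ middleLayers n := by
      simp [middleLayers]
    refine le_trans (le_of_eq ?_) (dist_le_setDiam hx hy)
    rw [dist_pathGraph_boxProd_petersen, hab, petersen_diam]
    simp only [Nat.dist]
    omega

lemma distToSet_middleLayers (hn : 2 ≤ n) (x : Fin n × PetersenVertex) :
    distToSet (pathGraph n □ petersen) x (middleLayers n)
      = if x.1.val < n / 2 then n / 2 - 1 - x.1.val else x.1.val - n / 2 := by
  set m := if x.1.val < n / 2 then n / 2 - 1 - x.1.val else x.1.val - n / 2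
  have hm (w : Fin n × PetersenVertex) (hw : w ∈ middleLayers n) : m ≤ Nat.dist x.1 w.1 := by
    simp only [middleLayers, Finset.mem_filter, Finset.mem_univ, true_and] at hw
    simp only [m, Nat.dist]
    split <;> omega
  obtain ⟨k, hk, hxk⟩ : ∃ k : Fin n, (k.val = n / 2 - 1 ∨ k.val = n / 2) ∧ Nat.dist x.1 k = m := by
    by_cases hx : x.1.val < n / 2
    · exact ⟨⟨n / 2 - 1, by omega⟩, Or.inl rfl, by simp only [m, hx, if_true, Nat.dist]; omega⟩
    · exact ⟨⟨n / 2, by omega⟩, Or.inr rfl, by simp only [m, hx, if_false, Nat.dist]; omega⟩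
  have hmem : (k, x.2) ∈ middleLayers n := by simpa [middleLayers] using hk
  have hdist : (pathGraph n □ petersen).dist x (k, x.2) = m := by
    rw [dist_pathGraph_boxProd_petersen, SimpleGraph.dist_self, add_zero, hxk]
  rw [← hdist]
  refine distToSet_eq_dist hmem fun w hw => ?_
  rw [hdist, dist_pathGraph_boxProd_petersen]
  exact (hm w hw).trans (Nat.le_add_right _ _)

lemma two_mul_sum_distToSet_middleLayers (hn : 2 ≤ n) (he : Even n) :
    2 * ∑ x : Fin n × PetersenVertex, distToSet (pathGraph n □ petersen) x (middleLayers n)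
      = 5 * n * (n - 2) := by
  obtain ⟨h, rfl⟩ := he
  simp only [Fintype.sum_prod_type, distToSet_middleLayers hn, Finset.sum_const,
    Finset.card_univ, card_petersenVertex, smul_eq_mul]
  rw [← Finset.mul_sum, Fin.sum_univ_eq_sum_range (fun i => if i < (h + h) / 2
    then (h + h) / 2 - 1 - i else i - (h + h) / 2), ← two_mul, Nat.mul_div_cancel_left h two_pos,
    sum_range_two_mul_dist_to_middle]
  obtain ⟨k, rfl⟩ := Nat.exists_eq_add_of_le (show 1 ≤ h by omega)
  simp only [Nat.add_sub_cancel_left, show 2 * (1 + k) - 2 = 2 * k by omega]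
  ring

end PetersenPrism

theorem stmt_16 (n : ℕ) (hn : 4 ≤ n) (he : Even n) :
    setDiam (pathGraph n □ petersen)
        ({x : Fin n × {s : Finset (Fin 5) // s.card = 2} |
            x.1.val = n / 2 - 1 ∨ x.1.val = n / 2} : Finset _) = 3
    ∧ 2 * ∑ x : Fin n × {s : Finset (Fin 5) // s.card = 2},
        distToSet (pathGraph n □ petersen) x
          ({x : Fin n × {s : Finset (Fin 5) // s.card = 2} |
              x.1.val = n / 2 - 1 ∨ x.1.val = n / 2} : Finset _)
      = 5 * n * (n - 2)
    ∧ 5 * n ^ 2 - n + 1 ≤ radioNumber (pathGraph n □ petersen) := by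
  have hdiamL := setDiam_middleLayers (by omega : 2 ≤ n)
  have hsum := two_mul_sum_distToSet_middleLayers (by omega : 2 ≤ n) he
  refine ⟨hdiamL, hsum, le_radioNumber fun φ hφ => ?_⟩
  have : NeZero n := ⟨by omega⟩
  have hbound := hφ.le_span (pathGraph_connected_of_neZero.boxProd petersen_connected)
    (middleLayers_nonempty (by omega))
  have hsumZ : 2 * ∑ x, (distToSet (pathGraph n □ petersen) x (middleLayers n) : ℤ)
      = 5 * n * ((n : ℤ) - 2) := by
    rw [← Nat.cast_ofNat, ← Nat.cast_sub (by omega)]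
    exact_mod_cast hsum
  rw [Fintype.card_prod, Fintype.card_fin, card_petersenVertex, diam_pathGraph_boxProd_petersen,
    hdiamL, hsumZ] at hbound
  have : n ≤ 5 * n ^ 2 := by nlinarith
  zify [this]
  push_cast at hbound
  nlinarith
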